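/- Let u and v be set compositions of disjoint finite nonempty sets of positive integers. Then in the left quasi-shuffle set u ⧢̃ v, the number of elements with an even number of letters equals the number of elements with an odd number of letters. -/

import Mathlib

open Finset

/-- `[n] = {1, …, n}` as a finset of naturals. -/
def seg (n : ℕ) : Finset ℕ := Finset.Icc 1 n

/-- A (raw) collection of blocks. -/
abbrev Blocks := Finset (Finset ℕ)

/-- The ground set (union of the blocks). -/
def ground (A : Blocks) : Finset ℕ := A.sup id

/-- `A` is a set partition of the finite set `X`: nonempty pairwise disjoint blocks with union `X`. -/
def IsPartitionOf (A : Blocks) (X : Finset ℕ) : Prop :=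
  (∀ B ∈ A, B.Nonempty) ∧ (A : Set (Finset ℕ)).PairwiseDisjoint id ∧ ground A = X

/-- `A` is a set partition of `[n]`. -/
def IsSP (A : Blocks) (n : ℕ) : Prop := IsPartitionOf A (seg n)

/-- The unique increasing bijection from `X` onto `[#X]`. -/
def stdFun (X : Finset ℕ) (x : ℕ) : ℕ := (X.filter (· < x)).card + 1

/-- Standardization of a collection of blocks. -/
def stdP (A : Blocks) : Blocks := A.image fun B => B.image (stdFun (ground A))

/-- Shift all entries of all blocks up by `k`. -/
def shiftP (A : Blocks) (k : ℕ) : Blocks := A.image fun B => B.image (· + k)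

/-- Concatenation `A | B` of set partitions: shift `B` up by the weight of `A`. -/
def concatP (A B : Blocks) : Blocks := A ∪ shiftP B (ground A).card

/-- The `i`-th block of `A` (1-based), where blocks are ordered by increasing minima. -/
def blockAt (A : Blocks) (i : ℕ) : Finset ℕ :=
  (A.filter fun B => (A.filter fun C => C.min ≤ B.min).card = i).sup id

/-- `A_J` : the subcollection of blocks of `A` indexed by `J`. -/
def subColl (A : Blocks) (J : Finset ℕ) : Blocks := J.image (blockAt A)

/-- `A` is an atomic set partition of `[n]`. -/
def IsAtomicSP (A : Blocks) (n : ℕ) : Prop :=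
  IsSP A n ∧ 1 ≤ n ∧
    ¬ ∃ m B C, 0 < m ∧ m < n ∧ IsSP B m ∧ IsSP C (n - m) ∧ A = concatP B C

/-- Raw set compositions: words whose letters are finsets of naturals. -/
abbrev SComp := List (Finset ℕ)

/-- The union of the letters of a word. -/
def sunion (γ : SComp) : Finset ℕ := γ.foldr (· ∪ ·) ∅

/-- `γ` is a set composition of `K`. -/
def IsSCompOf (γ : SComp) (K : Finset ℕ) : Prop :=
  (∀ B ∈ γ, B.Nonempty) ∧ γ.Pairwise Disjoint ∧ sunion γ = K

/-- `γ[A] = std(A_{γ₁}) | std(A_{γ₂}) | ⋯ | std(A_{γₛ})`. -/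
def applyComp (γ : SComp) (A : Blocks) : Blocks :=
  (γ.map fun g => stdP (subColl A g)).foldr concatP ∅

abbrev NCSym := Blocks →₀ ℚ

/-- The basis element of `NCSym` indexed by a set partition. -/
noncomputable def bas (A : Blocks) : NCSym := Finsupp.single A 1

/-- `p(A) = ∑_{γ ∈ Γ'(r)} (-1)^{ℓ(γ)-1} γ[A]`. -/
noncomputable def pNC (A : Blocks) (r : ℕ) : NCSym :=
  ∑ᶠ γ ∈ {γ : SComp | IsSCompOf γ (seg r) ∧ 1 ∈ γ.headI},
    ((-1 : ℚ) ^ (γ.length - 1)) • bas (applyComp γ A)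

open TensorProduct in
/-- `Δ(A) = ∑_{K ⊔ L = [r]} std(A_K) ⊗ std(A_L)` on a basis element. -/
noncomputable def deltaB (A : Blocks) : NCSym ⊗[ℚ] NCSym :=
  ∑ K ∈ (seg A.card).powerset,
    bas (stdP (subColl A K)) ⊗ₜ[ℚ] bas (stdP (subColl A (seg A.card \ K)))

/-- The coproduct of `NCSym`, extended linearly. -/
noncomputable def Delta : NCSym →ₗ[ℚ] TensorProduct ℚ NCSym NCSym :=
  Finsupp.lsum ℚ fun A => LinearMap.toSpanSingleton ℚ _ (deltaB A)
/-- The quasi-shuffle of two (disjoint) words. -/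
def qshuffle : SComp → SComp → Finset SComp
  | u, [] => {u}
  | [], v => {v}
  | a :: u', b :: v' =>
      ((qshuffle u' (b :: v')).image (a :: ·)) ∪
      ((qshuffle u' v').image ((a ∪ b) :: ·)) ∪
      ((qshuffle (a :: u') v').image (b :: ·))
  termination_by u v => u.length + v.length
  decreasing_by all_goals simp +arith +decide

/-- The left quasi-shuffle of two nonempty (disjoint) words; junk value `∅` on empty words. -/
def lqshuffle : SComp → SComp → Finset SComp
  | [], _ => ∅
  | _, [] => ∅
  | a :: u', b :: v' =>
      ((qshuffle u' (b :: v')).image (a :: ·)) ∪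
      ((qshuffle u' v').image ((a ∪ b) :: ·))


/-! The signed count `∑ (-1)^ℓ(w)` over `u ⧢ v` is `(-1)^(ℓ(u)+ℓ(v))`: the three branches of the
recursion are disjoint, because the letters `a`, `b`, `a ∪ b` are pairwise distinct for nonempty
disjoint `a`, `b`, and each branch prepends one letter. For the left quasi-shuffle of `a|u'` and
`b|v'` the two branches then contribute `-(-1)^(ℓ(u')+ℓ(v')+1)` and `-(-1)^(ℓ(u')+ℓ(v'))`, which
cancel. -/

theorem sum_neg_one_pow_eq_card_filter_even_sub_card_filter_odd {ι : Type*} (s : Finset ι)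
    (f : ι → ℕ) :
    ∑ i ∈ s, (-1 : ℤ) ^ f i = #(s.filter fun i => Even (f i)) - #(s.filter fun i => Odd (f i)) := by
  rw [← sum_filter_add_sum_filter_not s fun i => Even (f i),
    sum_congr rfl fun i hi => (mem_filter.1 hi).2.neg_one_pow,
    sum_congr rfl fun i hi => (Nat.not_even_iff_odd.1 (mem_filter.1 hi).2).neg_one_pow]
  simp [Nat.not_even_iff_odd, sub_eq_add_neg]

theorem sum_neg_one_pow_length_image_cons {α : Type*} [DecidableEq α] (a : α)
    (s : Finset (List α)) :
    ∑ w ∈ s.image (a :: ·), (-1 : ℤ) ^ w.length = -∑ w ∈ s, (-1 : ℤ) ^ w.length := by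
  rw [sum_image fun _ _ _ _ h => List.cons_injective h]
  simp [pow_succ]

theorem disjoint_image_cons {α : Type*} [DecidableEq α] {a b : α} (hab : a ≠ b)
    (s t : Finset (List α)) :
    Disjoint (s.image (a :: ·)) (t.image (b :: ·)) := by
  rw [disjoint_left]
  rintro _ hs ht
  obtain ⟨w, -, rfl⟩ := mem_image.1 hs
  obtain ⟨w', -, h⟩ := mem_image.1 ht
  exact hab (List.cons_eq_cons.1 h).1.symm

theorem Finset.ne_of_disjoint_of_nonempty {α : Type*} {a b : Finset α} (ha : a.Nonempty)
    (hab : Disjoint a b) : a ≠ b := by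
  rintro rfl
  exact ha.ne_empty (disjoint_self.1 hab)

theorem Finset.ne_union_of_disjoint {α : Type*} [DecidableEq α] {a b : Finset α}
    (hb : b.Nonempty) (hab : Disjoint a b) : a ≠ a ∪ b := by
  rw [ne_comm, Ne, union_eq_left]
  exact fun hba => ne_of_disjoint_of_nonempty hb (disjoint_of_subset_left hba hab) rfl

theorem sunion_cons (a : Finset ℕ) (u : SComp) : sunion (a :: u) = a ∪ sunion u := rfl

theorem sum_neg_one_pow_length_qshuffle (u v : SComp) (hu : ∀ a ∈ u, a.Nonempty)
    (hv : ∀ b ∈ v, b.Nonempty) (huv : Disjoint (sunion u) (sunion v)) :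
    ∑ w ∈ qshuffle u v, (-1 : ℤ) ^ w.length = (-1) ^ (u.length + v.length) := by
  induction u, v using qshuffle.induct with
  | case1 u => simp [qshuffle]
  | case2 b v' => simp [qshuffle]
  | case3 a u' b v' ih₁ ih₂ ih₃ =>
    rw [List.forall_mem_cons] at hu hv
    simp only [sunion_cons, disjoint_union_left, disjoint_union_right] at huv
    have hab : Disjoint a b := huv.1.1
    have ha_ne_b : a ≠ b := ne_of_disjoint_of_nonempty hu.1 hab
    have ha_ne_ab : a ≠ a ∪ b := ne_union_of_disjoint hv.1 hab
    have hb_ne_ab : b ≠ a ∪ b := union_comm a b ▸ ne_union_of_disjoint hu.1 hab.symm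
    rw [qshuffle, Finset.sum_union (disjoint_union_left.2
        ⟨disjoint_image_cons ha_ne_b _ _, disjoint_image_cons hb_ne_ab.symm _ _⟩),
      Finset.sum_union (disjoint_image_cons ha_ne_ab _ _), sum_neg_one_pow_length_image_cons,
      sum_neg_one_pow_length_image_cons, sum_neg_one_pow_length_image_cons,
      ih₁ hu.2 (List.forall_mem_cons.2 hv) (disjoint_union_right.2 ⟨huv.1.2, huv.2.2⟩),
      ih₂ hu.2 hv.2 huv.2.2,
      ih₃ (List.forall_mem_cons.2 hu) hv.2 (disjoint_union_left.2 ⟨huv.2.1, huv.2.2⟩)]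
    simp only [List.length_cons]
    ring

theorem sum_neg_one_pow_length_lqshuffle (u v : SComp) (hu : ∀ a ∈ u, a.Nonempty)
    (hv : ∀ b ∈ v, b.Nonempty) (huv : Disjoint (sunion u) (sunion v)) :
    ∑ w ∈ lqshuffle u v, (-1 : ℤ) ^ w.length = 0 := by
  match u, v with
  | [], _ => simp [lqshuffle]
  | _ :: _, [] => simp [lqshuffle]
  | a :: u', b :: v' =>
    rw [List.forall_mem_cons] at hu hv
    simp only [sunion_cons, disjoint_union_left, disjoint_union_right] at huv
    rw [lqshuffle,
      Finset.sum_union (disjoint_image_cons (ne_union_of_disjoint hv.1 huv.1.1) _ _),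
      sum_neg_one_pow_length_image_cons, sum_neg_one_pow_length_image_cons,
      sum_neg_one_pow_length_qshuffle u' (b :: v') hu.2 (List.forall_mem_cons.2 hv)
        (disjoint_union_right.2 ⟨huv.1.2, huv.2.2⟩),
      sum_neg_one_pow_length_qshuffle u' v' hu.2 hv.2 huv.2.2]
    simp only [List.length_cons]
    ring

theorem lqshuffle_even_card_eq_odd_card_general (K L : Finset ℕ)
    (hdisj : Disjoint K L) (u v : SComp) (hu : IsSCompOf u K) (hv : IsSCompOf v L) :
    ((lqshuffle u v).filter fun w => Even w.length).card
      = ((lqshuffle u v).filter fun w => Odd w.length).card := by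
  have hsum := sum_neg_one_pow_length_lqshuffle u v hu.1 hv.1 (hu.2.2 ▸ hv.2.2 ▸ hdisj)
  rw [sum_neg_one_pow_eq_card_filter_even_sub_card_filter_odd] at hsum
  omega

/-- For set compositions `u`, `v` of disjoint finite nonempty sets, the left
quasi-shuffle set `u ⧢̃ v` has as many elements with an even number of letters as elements
with an odd number of letters. -/
theorem lqshuffle_even_card_eq_odd_card (K L : Finset ℕ) (hK : K.Nonempty) (hL : L.Nonempty)
    (hdisj : Disjoint K L) (u v : SComp) (hu : IsSCompOf u K) (hv : IsSCompOf v L) :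
    ((lqshuffle u v).filter fun w => Even w.length).card
      = ((lqshuffle u v).filter fun w => Odd w.length).card :=
  lqshuffle_even_card_eq_odd_card_general K L hdisj u v hu hv
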